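/- Let (X,S) be a primitive unimodular proper S-adic subshift over the alphabet A and let μ, μ' be S-invariant Borel probability measures on X. If μ([a]) = μ'([a]) for all a ∈ A, then μ = μ' (in particular μ(U) = μ'(U) for every clopen subset U of X). -/

import Mathlib

open MeasureTheory Filter

section SadicPrelude

variable {A : Type*}

/-- The shift map on bi-infinite words. -/
def shift (x : ℤ → A) : ℤ → A := fun n => x (n + 1)

/-- The word `w` occurs (as a factor) in the bi-infinite word `x`. -/
def OccursIn (w : List A) (x : ℤ → A) : Prop :=
  ∃ i : ℤ, ∀ k : Fin w.length, x (i + (k.1 : ℤ)) = w.get k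

/-- The language of a subshift `X`. -/
def Lang (X : Set (ℤ → A)) : Set (List A) := {w | ∃ x ∈ X, OccursIn w x}

/-- Apply a morphism (substitution) to a word, by concatenation. -/
def wordApply (σ : A → List A) (w : List A) : List A := w.flatMap σ

/-- Composition of morphisms: first apply `τ`, then `σ`. -/
def morComp (σ τ : A → List A) : A → List A := fun a => wordApply σ (τ a)

/-- A morphism is non-erasing if images of letters are nonempty. -/
def NonErasing (σ : A → List A) : Prop := ∀ a, σ a ≠ []

/-- Incidence matrix of a morphism: entry `(b,a)` is the number of occurrences of `b` in `σ a`. -/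
def incMat [Fintype A] [DecidableEq A] (σ : A → List A) : Matrix A A ℤ :=
  Matrix.of fun b a => ((σ a).count b : ℤ)

/-- A morphism is unimodular if its incidence matrix has determinant ±1. -/
def IsUnimodular [Fintype A] [DecidableEq A] (σ : A → List A) : Prop :=
  (incMat σ).det = 1 ∨ (incMat σ).det = -1

/-- Left proper: all images start with the same letter. -/
def IsLeftProper (σ : A → List A) : Prop := ∃ b : A, ∀ a, (σ a).head? = some b

/-- Right proper: all images end with the same letter. -/
def IsRightProper (σ : A → List A) : Prop := ∃ b : A, ∀ a, (σ a).getLast? = some b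

/-- Proper: left and right proper. -/
def IsProper (σ : A → List A) : Prop := IsLeftProper σ ∧ IsRightProper σ

/-- `compFrom τ n m` is the composition `τ_n ∘ τ_{n+1} ∘ ⋯ ∘ τ_{n+m-1}`. -/
def compFrom (τ : ℕ → A → List A) (n : ℕ) : ℕ → A → List A
  | 0 => fun a => [a]
  | m + 1 => morComp (compFrom τ n m) (τ (n + m))

/-- `compSeq τ n` is the composition `τ_0 ∘ τ_1 ∘ ⋯ ∘ τ_{n-1}`. -/
def compSeq (τ : ℕ → A → List A) : ℕ → A → List A := compFrom τ 0

/-- The maximal length of images of letters under `τ_0 ∘ ⋯ ∘ τ_{n-1}` tends to infinity. -/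
def GrowsUnbounded [Fintype A] (τ : ℕ → A → List A) : Prop :=
  Tendsto (fun n => Finset.univ.sup fun a : A => (compSeq τ n a).length) atTop atTop

/-- A directive sequence is primitive if for all `n` there is `m > 0` such that every letter
occurs in every image of `τ_n ∘ ⋯ ∘ τ_{n+m-1}`. -/
def IsPrimitive (τ : ℕ → A → List A) : Prop :=
  ∀ n : ℕ, ∃ m : ℕ, 0 < m ∧ ∀ a b : A, b ∈ compFrom τ n m a

/-- The language of a directive sequence: all factors of the images `τ_0 ∘ ⋯ ∘ τ_{n-1}(a)`. -/
def SadicLang (τ : ℕ → A → List A) : Set (List A) :=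
  {w | ∃ (n : ℕ) (a : A), w <:+: compSeq τ n a}

/-- The S-adic subshift generated by a directive sequence. -/
def SadicShift (τ : ℕ → A → List A) : Set (ℤ → A) :=
  {x | ∀ w : List A, OccursIn w x → w ∈ SadicLang τ}

/-- The shift map restricted to an invariant set `X`. -/
def shiftOn (X : Set (ℤ → A)) (h : ∀ x ∈ X, shift x ∈ X) : X → X :=
  fun x => ⟨shift x.1, h x.1 x.2⟩

/-- The cylinder of a letter `a` inside `X`. -/
def cylLetter (X : Set (ℤ → A)) (a : A) : Set X := {x : X | x.1 0 = a}

/-- The cylinder of a word `w` inside `X`. -/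
def cylWord (X : Set (ℤ → A)) (w : List A) : Set X :=
  {x : X | ∀ k : Fin w.length, x.1 (k.1 : ℤ) = w.get k}

/-- `μ` is a `T`-invariant Borel probability measure. -/
def InvProb {Y : Type*} [MeasurableSpace Y] (T : Y → Y) (μ : Measure Y) : Prop :=
  IsProbabilityMeasure μ ∧ MeasurePreserving T μ μ

/-- A real-valued function is balanced for the dynamical system given by `T`. -/
def IsBalanced {Y : Type*} (T : Y → Y) (f : Y → ℝ) : Prop :=
  ∃ C : ℝ, 0 < C ∧ ∀ x y : Y, ∀ n : ℕ,
    |∑ i ∈ Finset.range (n + 1), (f (T^[i] x) - f (T^[i] y))| ≤ C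

end SadicPrelude

/-!
Fix a word `w`. Properness, primitivity and growth give a level `n` at which all the images
`θ a = τ₀ ⋯ τₙ₋₁ (a)` start with a common prefix `p` with `|w| ≤ |p|`. A word `u` of the language
is a concatenation of blocks `θ a` up to two pieces of bounded length; as every block is followed
by `p`, the number of occurrences of `w` in `u` is `∑ₐ mₐ cₐ` up to a bounded error, where `mₐ`
counts the blocks `θ a` in `u` and `cₐ` the occurrences of `w` starting in `θ a` inside `θ a ++ p`.
In the same way the letter counts of `u` are `M m` up to a bounded error, `M` being the incidence
matrix of `θ`. It is unimodular, so `c = r M` for some `r`, and `|u|_w - ∑_b r_b |u|_b` is bounded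
uniformly in `u`. Integrating over windows of length `L` against an invariant probability measure
and letting `L → ∞` gives `μ[w] = ∑_b r_b μ[b]`. So the letter frequencies determine the measures
of all cylinders, which form a generating π-system.
-/

section Occurrences

variable {A : Type*} [DecidableEq A]

def occCount (w z : List A) (N : ℕ) : ℕ :=
  ∑ i ∈ Finset.range N, if w <+: z.drop i then 1 else 0

lemma occCount_le (w z : List A) (N : ℕ) : occCount w z N ≤ N := by
  calc occCount w z N ≤ ∑ _i ∈ Finset.range N, 1 :=
        Finset.sum_le_sum fun i _ => by split_ifs <;> simp
    _ = N := by simp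

lemma occCount_add (w z : List A) (M K : ℕ) :
    occCount w z (M + K) = occCount w z M + occCount w (z.drop M) K := by
  simp only [occCount, Finset.sum_range_add, List.drop_drop]

lemma occCount_le_occCount_add (w z : List A) (M K : ℕ) :
    occCount w z M ≤ occCount w z (M + K) := by
  rw [occCount_add]; exact Nat.le_add_right _ _

lemma occCount_add_le (w z : List A) (M K : ℕ) :
    occCount w z (M + K) ≤ occCount w z M + K := by
  rw [occCount_add]; exact Nat.add_le_add_left (occCount_le _ _ _) _

omit [DecidableEq A] in
lemma prefix_append_iff_of_length_le {w l x : List A} (h : w.length ≤ l.length) :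
    w <+: l ++ x ↔ w <+: l := by
  rw [List.prefix_iff_eq_take, List.prefix_iff_eq_take, List.take_append_of_le_length h]

lemma occCount_append_congr {w z : List A} {N : ℕ} (h : N + w.length ≤ z.length + 1)
    (x y : List A) : occCount w (z ++ x) N = occCount w (z ++ y) N := by
  refine Finset.sum_congr rfl fun i hi => ?_
  have hi : i + w.length ≤ z.length := by rw [Finset.mem_range] at hi; omega
  have hlen : w.length ≤ (z.drop i).length := by rw [List.length_drop]; omega
  simp only [List.drop_append_of_le_length (by omega : i ≤ z.length),
    prefix_append_iff_of_length_le hlen]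

lemma occCount_append_le (w z x y : List A) :
    occCount w (z ++ x) z.length ≤ occCount w (z ++ y) z.length + w.length := by
  rcases le_or_gt w.length z.length with h | h
  · obtain ⟨N, hN⟩ : ∃ N, z.length = N + w.length := ⟨z.length - w.length, by omega⟩
    calc occCount w (z ++ x) z.length ≤ occCount w (z ++ x) N + w.length := by
          rw [hN]; exact occCount_add_le _ _ _ _
      _ = occCount w (z ++ y) N + w.length := by
          rw [occCount_append_congr (by omega) x y]
      _ ≤ occCount w (z ++ y) z.length + w.length := by
          rw [hN]; exact Nat.add_le_add_right (occCount_le_occCount_add _ _ _ _) _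
  · exact (occCount_le _ _ _).trans (by omega)

lemma occCount_singleton (b : A) (z : List A) : occCount [b] z z.length = z.count b := by
  induction z with
  | nil => simp [occCount]
  | cons c z ih =>
      rw [List.length_cons, add_comm, occCount_add, List.drop_one, List.tail_cons, ih,
        List.count_cons]
      simp only [occCount, Finset.sum_range_one, List.drop_zero, List.cons_prefix_cons,
        List.nil_prefix, and_true]
      by_cases hbc : b = c <;> simp [hbc, Ne.symm, add_comm]

end Occurrences

section Morphisms

variable {A : Type*}

@[simp]
lemma wordApply_nil (σ : A → List A) : wordApply σ [] = [] := rfl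

@[simp]
lemma wordApply_cons (σ : A → List A) (a : A) (V : List A) :
    wordApply σ (a :: V) = σ a ++ wordApply σ V := List.flatMap_cons

lemma wordApply_wordApply (σ ρ : A → List A) (V : List A) :
    wordApply σ (wordApply ρ V) = wordApply (morComp σ ρ) V :=
  List.flatMap_assoc

lemma infix_wordApply_of_mem (σ : A → List A) {a : A} {V : List A} (h : a ∈ V) :
    σ a <:+: wordApply σ V := by
  obtain ⟨s, t, rfl⟩ := List.append_of_mem h
  exact ⟨wordApply σ s, wordApply σ t, by simp [wordApply]⟩

lemma prefix_wordApply_append {σ : A → List A} {p : List A} (hp : ∀ a, p <+: σ a) :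
    ∀ V, p <+: wordApply σ V ++ p
  | [] => List.prefix_refl p
  | a :: V => by rw [wordApply_cons, List.append_assoc]; exact List.prefix_append_of_prefix (hp a)

lemma exists_eq_wordApply_append_of_prefix {θ : A → List A} {H : ℕ}
    (hH : ∀ a, (θ a).length ≤ H) :
    ∀ {V u : List A}, u <+: wordApply θ V → ∃ V' e, u = wordApply θ V' ++ e ∧ e.length ≤ H
  | [], u, hu => ⟨[], [], by simpa using hu, Nat.zero_le _⟩
  | a :: V, u, hu => by
      rw [wordApply_cons] at hu
      rcases le_or_gt u.length (θ a).length with h | h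
      · exact ⟨[], u, by simp, h.trans (hH a)⟩
      · obtain ⟨u', rfl⟩ := List.prefix_of_prefix_length_le (List.prefix_append _ _) hu h.le
        obtain ⟨V', e, rfl, he⟩ :=
          exists_eq_wordApply_append_of_prefix hH ((List.prefix_append_right_inj _).1 hu)
        exact ⟨a :: V', e, by simp, he⟩

lemma exists_eq_append_wordApply_append_of_infix {θ : A → List A} {H : ℕ}
    (hH : ∀ a, (θ a).length ≤ H) :
    ∀ {V u : List A}, u <:+: wordApply θ V →
      ∃ e₁ V' e₂, u = e₁ ++ wordApply θ V' ++ e₂ ∧ e₁.length ≤ H ∧ e₂.length ≤ H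
  | [], u, hu => ⟨[], [], [], by simpa using hu, Nat.zero_le _, Nat.zero_le _⟩
  | a :: V, u, hu => by
      rw [wordApply_cons, List.infix_append_iff] at hu
      rcases hu with hu | hu | ⟨l₁, l₂, rfl, hl₁, hl₂⟩
      · exact ⟨u, [], [], by simp, hu.length_le.trans (hH a), Nat.zero_le _⟩
      · exact exists_eq_append_wordApply_append_of_infix hH hu
      · obtain ⟨V', e, rfl, he⟩ := exists_eq_wordApply_append_of_prefix hH hl₂
        exact ⟨l₁, V', e, by simp, hl₁.length_le.trans (hH a), he⟩

variable [DecidableEq A]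

/-- An occurrence of `w` starting inside a block `σ a` ends inside `σ a ++ p`, since the next
block starts with `p`. -/
lemma occCount_wordApply_append {σ : A → List A} {p w : List A} (hp : ∀ a, p <+: σ a)
    (hw : w.length ≤ p.length + 1) :
    ∀ V, occCount w (wordApply σ V ++ p) (wordApply σ V).length
      = (V.map fun a => occCount w (σ a ++ p) (σ a).length).sum
  | [] => by simp [occCount]
  | a :: V => by
      obtain ⟨t, ht⟩ := prefix_wordApply_append hp V
      have hfirst : occCount w (σ a ++ wordApply σ V ++ p) (σ a).length
          = occCount w (σ a ++ p) (σ a).length := by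
        have hlen : (σ a).length + w.length ≤ (σ a ++ p).length + 1 := by
          rw [List.length_append]; omega
        rw [List.append_assoc, ← ht, ← List.append_assoc]
        simpa using occCount_append_congr hlen t []
      rw [wordApply_cons, List.length_append, occCount_add, hfirst, List.append_assoc,
        List.drop_left, occCount_wordApply_append hp hw V, List.map_cons, List.sum_cons]

variable [Fintype A]

lemma sum_map_eq_sum_count {M : Type*} [AddCommMonoid M] (l : List A) (f : A → M) :
    (l.map f).sum = ∑ a, l.count a • f a := by
  rw [Finset.sum_list_map_count]
  exact Finset.sum_subset (Finset.subset_univ _) fun a _ ha => by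
    rw [List.count_eq_zero_of_not_mem (by simpa using ha), zero_smul]

lemma count_wordApply (σ : A → List A) (V : List A) (b : A) :
    (wordApply σ V).count b = ∑ a, V.count a * (σ a).count b := by
  rw [wordApply, List.count_flatMap, sum_map_eq_sum_count]
  rfl

lemma abs_occCount_sub_sum_le {θ : A → List A} {p w e₁ e₂ : List A} {H : ℕ} (V : List A)
    (hp : ∀ a, p <+: θ a) (hw : w.length ≤ p.length + 1)
    (he₁ : e₁.length ≤ H) (he₂ : e₂.length ≤ H) :
    |(occCount w (e₁ ++ wordApply θ V ++ e₂) (e₁ ++ wordApply θ V ++ e₂).length : ℝ)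
        - ∑ a, (occCount w (θ a ++ p) (θ a).length : ℝ) * V.count a| ≤ 2 * H + w.length := by
  set Y := wordApply θ V
  have hblocks : ∑ a, (occCount w (θ a ++ p) (θ a).length : ℝ) * V.count a
      = occCount w (Y ++ p) Y.length := by
    rw [occCount_wordApply_append hp hw, sum_map_eq_sum_count]
    push_cast [smul_eq_mul]
    simp only [mul_comm]
  have hsplit : occCount w (e₁ ++ Y ++ e₂) (e₁ ++ Y ++ e₂).length
      = occCount w (e₁ ++ Y ++ e₂) e₁.length + occCount w (Y ++ e₂) Y.length
        + occCount w e₂ e₂.length := by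
    rw [List.length_append, List.length_append, add_assoc, occCount_add, occCount_add,
      List.append_assoc, List.drop_left, List.drop_left, add_assoc]
  have h₁ := occCount_le w (e₁ ++ Y ++ e₂) e₁.length
  have h₂ := occCount_le w e₂ e₂.length
  have h₃ := occCount_append_le w Y e₂ p
  have h₄ := occCount_append_le w Y p e₂
  rw [hblocks, hsplit, abs_sub_le_iff, sub_le_iff_le_add, sub_le_iff_le_add]
  constructor <;> norm_cast <;> omega

end Morphisms

section DirectiveSequence

variable {A : Type*} {τ : ℕ → A → List A}

lemma compFrom_add (τ : ℕ → A → List A) (n m : ℕ) :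
    ∀ k a, compFrom τ n (m + k) a = wordApply (compFrom τ n m) (compFrom τ (n + m) k a)
  | 0, a => by simp [compFrom, wordApply]
  | k + 1, a => by
      show wordApply (compFrom τ n (m + k)) (τ (n + (m + k)) a)
        = wordApply (compFrom τ n m) (wordApply (compFrom τ (n + m) k) (τ (n + m + k) a))
      rw [wordApply_wordApply, ← Nat.add_assoc]
      congr 1
      funext b
      exact compFrom_add τ n m k b

lemma compSeq_add (τ : ℕ → A → List A) (n k : ℕ) (a : A) :
    compSeq τ (n + k) a = wordApply (compSeq τ n) (compFrom τ n k a) := by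
  simpa [compSeq] using compFrom_add τ 0 n k a

lemma compSeq_succ (τ : ℕ → A → List A) (n : ℕ) (a : A) :
    compSeq τ (n + 1) a = wordApply (compSeq τ n) (τ n a) := by
  simp [compSeq, compFrom, morComp]

lemma infix_compSeq_of_mem {n k : ℕ} {a b : A} (h : b ∈ compFrom τ n k a) :
    compSeq τ n b <:+: compSeq τ (n + k) a := by
  rw [compSeq_add]
  exact infix_wordApply_of_mem _ h

lemma exists_forall_le_length_compSeq [Fintype A] (hgrow : GrowsUnbounded τ)
    (hprim : IsPrimitive τ) (L : ℕ) : ∃ n, ∀ a, L ≤ (compSeq τ n a).length := by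
  obtain ⟨n, hn⟩ := (hgrow.eventually_ge_atTop (L + 1)).exists
  obtain ⟨a₀, -, ha₀⟩ := (Finset.le_sup_iff (Nat.succ_pos L)).1 hn
  obtain ⟨k, -, hk⟩ := hprim n
  exact ⟨n + k, fun a => (Nat.le_succ L).trans
    (ha₀.trans (infix_compSeq_of_mem (hk a a₀)).length_le)⟩

lemma exists_prefix_forall_compSeq [Fintype A] (hgrow : GrowsUnbounded τ)
    (hprim : IsPrimitive τ) (hprop : ∀ n, IsProper (τ n)) (L : ℕ) :
    ∃ n p, (∀ a, p <+: compSeq τ n a) ∧ L ≤ p.length := by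
  obtain ⟨m, hm⟩ := exists_forall_le_length_compSeq hgrow hprim L
  obtain ⟨β, hβ⟩ := (hprop m).1
  refine ⟨m + 1, compSeq τ m β, fun a => ?_, hm β⟩
  obtain ⟨t, ht⟩ := List.head?_eq_some_iff.1 (hβ a)
  rw [compSeq_succ, ht, wordApply_cons]
  exact List.prefix_append _ _

lemma exists_infix_compSeq_of_le (hprim : IsPrimitive τ) (K : ℕ) (a : A) :
    ∀ d, ∃ K', K + d ≤ K' ∧ compSeq τ K a <:+: compSeq τ K' a
  | 0 => ⟨K, le_rfl, List.infix_refl _⟩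
  | d + 1 => by
      obtain ⟨K', hK', hinf⟩ := exists_infix_compSeq_of_le hprim K a d
      obtain ⟨k, hk, hmem⟩ := hprim K'
      exact ⟨K' + k, by omega, hinf.trans (infix_compSeq_of_mem (hmem a a))⟩

lemma exists_infix_wordApply_of_mem_sadicLang (hprim : IsPrimitive τ) {u : List A}
    (hu : u ∈ SadicLang τ) (n : ℕ) : ∃ V, u <:+: wordApply (compSeq τ n) V := by
  obtain ⟨K, a, hK⟩ := hu
  obtain ⟨K', hK', hinf⟩ := exists_infix_compSeq_of_le hprim K a n
  refine ⟨compFrom τ n (K' - n) a, ?_⟩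
  rw [← compSeq_add, Nat.add_sub_cancel' (by omega)]
  exact hK.trans hinf

lemma lang_sadicShift_subset (τ : ℕ → A → List A) : Lang (SadicShift τ) ⊆ SadicLang τ :=
  fun _ ⟨_, hx, hocc⟩ => hx _ hocc

variable [Fintype A] [DecidableEq A]

lemma incMat_morComp (σ ρ : A → List A) : incMat (morComp σ ρ) = incMat σ * incMat ρ := by
  ext b a
  simp [incMat, morComp, Matrix.mul_apply, count_wordApply, mul_comm]

lemma isUnit_det_incMat_compFrom (huni : ∀ n, IsUnimodular (τ n)) (n : ℕ) :
    ∀ m, IsUnit (incMat (compFrom τ n m)).det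
  | 0 => by
      have : incMat (compFrom τ n 0) = 1 := by
        ext b a
        by_cases h : b = a <;> simp [incMat, compFrom, Matrix.one_apply, h, Ne.symm]
      simp [this]
  | m + 1 => by
      rw [show compFrom τ n (m + 1) = morComp (compFrom τ n m) (τ (n + m)) from rfl,
        incMat_morComp, Matrix.det_mul]
      exact (isUnit_det_incMat_compFrom huni n m).mul (Int.isUnit_iff.2 (huni _))

end DirectiveSequence

section Approximation

open Matrix

lemma abs_sub_dotProduct_le {ι : Type*} [Fintype ι] {M : Matrix ι ι ℝ} {r c : ι → ℝ}
    (h : r ᵥ* M = c) (y : ℝ) (m z : ι → ℝ) :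
    |y - r ⬝ᵥ z| ≤ |y - c ⬝ᵥ m| + ∑ i, |r i| * |(M *ᵥ m) i - z i| := by
  have hsplit : y - r ⬝ᵥ z = (y - c ⬝ᵥ m) + r ⬝ᵥ (M *ᵥ m - z) := by
    rw [dotProduct_sub, dotProduct_mulVec, h]; ring
  calc |y - r ⬝ᵥ z| ≤ |y - c ⬝ᵥ m| + |r ⬝ᵥ (M *ᵥ m - z)| := hsplit ▸ abs_add_le _ _
    _ ≤ _ := by
      gcongr
      simpa [dotProduct, abs_mul] using Finset.abs_sum_le_sum_abs (fun i => r i * _) _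

variable {A : Type*} [Fintype A] [DecidableEq A] {τ : ℕ → A → List A}

theorem exists_abs_occCount_sub_sum_le (hgrow : GrowsUnbounded τ) (hprim : IsPrimitive τ)
    (huni : ∀ n, IsUnimodular (τ n)) (hprop : ∀ n, IsProper (τ n)) (w : List A) :
    ∃ (r : A → ℝ) (C : ℝ), ∀ u ∈ SadicLang τ,
      |(occCount w u u.length : ℝ) - ∑ b, r b * occCount [b] u u.length| ≤ C := by
  obtain ⟨n, p, hp, hwp⟩ := exists_prefix_forall_compSeq hgrow hprim hprop w.length
  set θ := compSeq τ n
  set H := Finset.univ.sup fun a => (θ a).length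
  have hH : ∀ a, (θ a).length ≤ H := fun a =>
    Finset.le_sup (f := fun a => (θ a).length) (Finset.mem_univ a)
  set M : Matrix A A ℝ := (Int.castRingHom ℝ).mapMatrix (incMat θ)
  have hM : IsUnit M.det := by
    rw [← RingHom.map_det]; exact (isUnit_det_incMat_compFrom huni 0 n).map _
  set c : A → ℝ := fun a => occCount w (θ a ++ p) (θ a).length
  have hr : (c ᵥ* M⁻¹) ᵥ* M = c := by
    rw [vecMul_vecMul, nonsing_inv_mul _ hM, vecMul_one]
  refine ⟨c ᵥ* M⁻¹, 2 * H + w.length + ∑ b, |(c ᵥ* M⁻¹) b| * (2 * H + 1), fun u hu => ?_⟩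
  obtain ⟨V, hV⟩ := exists_infix_wordApply_of_mem_sadicLang hprim hu n
  obtain ⟨e₁, V', e₂, rfl, he₁, he₂⟩ := exists_eq_append_wordApply_append_of_infix hH hV
  refine (abs_sub_dotProduct_le hr _ (fun a => V'.count a) _).trans
    (add_le_add ?_ (Finset.sum_le_sum fun b _ => ?_))
  · exact abs_occCount_sub_sum_le V' hp (by omega) he₁ he₂
  · have hb := abs_occCount_sub_sum_le V' (θ := θ) (w := [b]) (fun a => List.nil_prefix) le_rfl
      he₁ he₂
    simp only [List.append_nil, occCount_singleton, List.length_singleton, Nat.cast_one] at hb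
    have hMm : (M *ᵥ fun a => (V'.count a : ℝ)) b = ∑ a, ((θ a).count b : ℝ) * V'.count a := by
      simp [M, incMat, mulVec, dotProduct]
    gcongr
    rw [abs_sub_comm, hMm, occCount_singleton]
    exact hb

end Approximation

lemma eq_of_forall_abs_nat_mul_sub_add_le {a b d C : ℝ} (h : ∀ N : ℕ, |N * (a - b) + d| ≤ C) :
    a = b := by
  by_contra hne
  have hpos : 0 < |a - b| := abs_pos.2 (sub_ne_zero.2 hne)
  obtain ⟨N, hN⟩ := exists_nat_gt ((C + |d|) / |a - b|)
  rw [div_lt_iff₀ hpos] at hN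
  have h₁ : |(N : ℝ) * (a - b)| ≤ |N * (a - b) + d| + |d| := by
    simpa using abs_sub (N * (a - b) + d) d
  rw [abs_mul, Nat.abs_cast] at h₁
  linarith [h N]

section Cylinders

variable {A : Type*} {X : Set (ℤ → A)}

def cylAt (X : Set (ℤ → A)) (i : ℤ) (w : List A) : Set X :=
  {x : X | ∀ k : Fin w.length, x.1 (i + k) = w.get k}

lemma cylAt_zero (w : List A) : cylAt X 0 w = cylWord X w := by
  ext x; simp [cylAt, cylWord]

lemma cylWord_singleton (b : A) : cylWord X [b] = cylLetter X b := by
  ext x; simp [cylWord, cylLetter]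

lemma preimage_shiftOn_cylAt (hS : ∀ x ∈ X, shift x ∈ X) (i : ℤ) (w : List A) :
    shiftOn X hS ⁻¹' cylAt X i w = cylAt X (i + 1) w := by
  ext x
  simp only [cylAt, Set.mem_preimage, shiftOn, shift, Set.mem_ofPred_eq]
  exact forall_congr' fun k => by rw [add_right_comm]

def window (X : Set (ℤ → A)) (L : ℕ) (x : X) : List A := List.ofFn fun j : Fin L => x.1 j

@[simp]
lemma length_window (L : ℕ) (x : X) : (window X L x).length = L := List.length_ofFn

lemma window_mem_lang (L : ℕ) (x : X) : window X L x ∈ Lang X :=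
  ⟨x.1, x.2, 0, fun ⟨k, hk⟩ => by simp [window]⟩

lemma prefix_drop_window_iff {L i : ℕ} {w : List A} {x : X} (h : i + w.length ≤ L) :
    w <+: (window X L x).drop i ↔ x ∈ cylAt X i w := by
  rw [List.prefix_iff_getElem]
  simp only [List.length_drop, List.getElem_drop, window, List.getElem_ofFn, List.length_ofFn]
  refine ⟨fun ⟨_, hk⟩ k => ?_, fun hx => ⟨by omega, fun k hk => ?_⟩⟩
  · simpa using (hk k k.2).symm
  · simpa using (hx ⟨k, hk⟩).symm

variable [MeasurableSpace A] [MeasurableSingletonClass A]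

lemma measurableSet_cylAt (i : ℤ) (w : List A) : MeasurableSet (cylAt X i w) := by
  have : cylAt X i w = ⋂ k : Fin w.length, (fun x : X => x.1 (i + k)) ⁻¹' {w.get k} := by
    ext x; simp [cylAt]
  rw [this]
  exact .iInter fun k =>
    ((measurable_pi_apply _).comp measurable_subtype_coe) (measurableSet_singleton _)

variable {hS : ∀ x ∈ X, shift x ∈ X} {μ : Measure X}

lemma measure_cylAt (hμ : InvProb (shiftOn X hS) μ) (i : ℤ) (w : List A) :
    μ (cylAt X i w) = μ (cylWord X w) := by
  have hstep : ∀ j : ℤ, μ (cylAt X (j + 1) w) = μ (cylAt X j w) := fun j => by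
    rw [← preimage_shiftOn_cylAt hS]
    exact hμ.2.measure_preimage (measurableSet_cylAt j w).nullMeasurableSet
  induction i using Int.induction_on with
  | zero => rw [cylAt_zero]
  | succ j ih => rw [hstep, ih]
  | pred j ih => rw [← ih, ← hstep, sub_add_cancel]

end Cylinders

section Windows

variable {A : Type*} [DecidableEq A] {X : Set (ℤ → A)}

lemma occCount_eq_of_length_le {w z : List A} (hw : w ≠ []) {N M : ℕ}
    (h : z.length + 1 ≤ N + w.length) (hNM : N ≤ M) : occCount w z M = occCount w z N := by
  have hℓ := List.length_pos_iff.2 hw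
  obtain ⟨K, rfl⟩ := Nat.exists_eq_add_of_le hNM
  rw [occCount_add, Nat.add_eq_left]
  refine Finset.sum_eq_zero fun j _ => if_neg fun hpre => ?_
  have := hpre.length_le
  simp only [List.length_drop] at this
  omega

lemma occCount_window_eq_sum_indicator {w : List A} (hw : w ≠ []) (N : ℕ) (x : X) :
    (occCount w (window X (N + w.length) x) (N + w.length) : ℝ)
      = ∑ i ∈ Finset.range (N + 1), (cylAt X i w).indicator 1 x := by
  have hℓ := List.length_pos_iff.2 hw
  rw [occCount_eq_of_length_le (z := window X (N + w.length) x) hw (N := N + 1) (by simp)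
    (by omega), occCount]
  push_cast
  refine Finset.sum_congr rfl fun i hi => ?_
  rw [Finset.mem_range] at hi
  classical
  rw [Set.indicator_apply]
  exact if_congr (prefix_drop_window_iff (by omega)) rfl rfl

variable [MeasurableSpace A] [MeasurableSingletonClass A] {hS : ∀ x ∈ X, shift x ∈ X}
  {μ : Measure X}

lemma integrable_occCount_window [IsFiniteMeasure μ] {w : List A} (hw : w ≠ []) {N L : ℕ}
    (hL : L = N + w.length) : Integrable (fun x => (occCount w (window X L x) L : ℝ)) μ := by
  subst hL
  simp_rw [occCount_window_eq_sum_indicator hw]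
  exact integrable_finsetSum _ fun i _ => (integrable_const 1).indicator (measurableSet_cylAt _ _)

lemma integral_occCount_window (hμ : InvProb (shiftOn X hS) μ) {w : List A}
    (hw : w ≠ []) {N L : ℕ} (hL : L = N + w.length) :
    ∫ x, (occCount w (window X L x) L : ℝ) ∂μ = (N + 1) * μ.real (cylWord X w) := by
  have := hμ.1
  subst hL
  simp_rw [occCount_window_eq_sum_indicator hw]
  rw [integral_finsetSum _ fun i _ => (integrable_const 1).indicator (measurableSet_cylAt _ _)]
  simp_rw [integral_indicator_one (measurableSet_cylAt _ _), measureReal_def, measure_cylAt hμ]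
  rw [Finset.sum_const, Finset.card_range, nsmul_eq_mul]
  push_cast
  rfl

end Windows

section Frequencies

variable {A : Type*} [Fintype A] [DecidableEq A] [MeasurableSpace A] [MeasurableSingletonClass A]
  {X : Set (ℤ → A)} {hS : ∀ x ∈ X, shift x ∈ X} {μ : Measure X}

theorem measureReal_cylWord_eq_sum (hμ : InvProb (shiftOn X hS) μ) {w : List A} (hw : w ≠ [])
    (r : A → ℝ) (C : ℝ)
    (hC : ∀ u ∈ Lang X, |(occCount w u u.length : ℝ) - ∑ b, r b * occCount [b] u u.length| ≤ C) :
    μ.real (cylWord X w) = ∑ b, r b * μ.real (cylLetter X b) := by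
  have := hμ.1
  obtain ⟨ℓ, hℓ⟩ := Nat.exists_eq_add_of_lt (List.length_pos_iff.2 hw)
  set ρ := ∑ b, r b * μ.real (cylLetter X b)
  refine eq_of_forall_abs_nat_mul_sub_add_le (d := μ.real (cylWord X w) - (ℓ + 1) * ρ)
    (C := C) fun N => ?_
  set L := N + w.length
  have hL (b : A) : L = N + ℓ + [b].length := by
    rw [List.length_singleton]; omega
  have hint (b : A) : Integrable (fun x => (occCount [b] (window X L x) L : ℝ)) μ :=
    integrable_occCount_window (List.cons_ne_nil b []) (hL b)
  have hletter (b : A) : ∫ x, (occCount [b] (window X L x) L : ℝ) ∂μ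
      = (N + ℓ + 1) * μ.real (cylLetter X b) := by
    rw [integral_occCount_window hμ (List.cons_ne_nil b []) (hL b), cylWord_singleton]
    push_cast; ring
  have hletters : ∑ b, r b * ∫ x, (occCount [b] (window X L x) L : ℝ) ∂μ = (N + ℓ + 1) * ρ := by
    simp_rw [hletter, ρ, Finset.mul_sum]
    exact Finset.sum_congr rfl fun b _ => by ring
  have hmean : ∫ x, ((occCount w (window X L x) L : ℝ)
      - ∑ b, r b * occCount [b] (window X L x) L) ∂μ
      = N * (μ.real (cylWord X w) - ρ) + (μ.real (cylWord X w) - (ℓ + 1) * ρ) := by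
    rw [integral_sub (integrable_occCount_window hw rfl)
        (integrable_finsetSum _ fun b _ => (hint b).const_mul _),
      integral_finsetSum _ fun b _ => (hint b).const_mul _, integral_occCount_window hμ hw rfl]
    simp_rw [integral_const_mul]
    rw [hletters]
    ring
  rw [← hmean, ← Real.norm_eq_abs]
  refine (norm_integral_le_of_norm_le_const (C := C) (ae_of_all _ fun x => ?_)).trans_eq
    (by simp)
  simpa using hC _ (window_mem_lang L x)

end Frequencies

section WindowCylinders

variable {A : Type*}

/-- Windows centred at `0` are nested, which makes these cylinders a π-system. -/
def windowCyl (k : ℕ) (v : Set.Icc (-(k : ℤ)) k → A) : Set (ℤ → A) :=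
  {x | ∀ j : Set.Icc (-(k : ℤ)) k, x j = v j}

lemma windowCyl_inter_of_le {k k' : ℕ} (hk : k ≤ k') {v v'} {x : ℤ → A}
    (hx : x ∈ windowCyl k v) (hx' : x ∈ windowCyl k' v') :
    windowCyl k v ∩ windowCyl k' v' = windowCyl k' v' := by
  refine Set.inter_eq_self_of_subset_right fun y hy j => ?_
  have hj : (j : ℤ) ∈ Set.Icc (-(k' : ℤ)) k' := ⟨by have := j.2.1; omega, by have := j.2.2; omega⟩
  exact (hy ⟨j, hj⟩).trans ((hx' ⟨j, hj⟩).symm.trans (hx j))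

lemma isPiSystem_windowCyl : IsPiSystem {s : Set (ℤ → A) | ∃ k v, s = windowCyl k v} := by
  rintro _ ⟨k, v, rfl⟩ _ ⟨k', v', rfl⟩ ⟨x, hx, hx'⟩
  rcases le_total k k' with h | h
  · exact ⟨k', v', windowCyl_inter_of_le h hx hx'⟩
  · exact ⟨k, v, by rw [Set.inter_comm]; exact windowCyl_inter_of_le h hx' hx⟩

lemma preimage_val_windowCyl (X : Set (ℤ → A)) (k : ℕ) (v : Set.Icc (-(k : ℤ)) k → A) :
    (Subtype.val ⁻¹' windowCyl k v : Set X)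
      = cylAt X (-k) (List.ofFn fun n : Fin (2 * k + 1) =>
          v ⟨-k + n, by have := n.2; omega, by have := n.2; omega⟩) := by
  ext x
  simp only [Set.mem_preimage, windowCyl, cylAt, Set.mem_ofPred_eq]
  constructor
  · intro h n
    rw [List.get_ofFn]
    exact h ⟨_, _⟩
  · rintro h ⟨j, hj⟩
    obtain ⟨n, rfl⟩ : ∃ n : ℕ, j = -k + n := ⟨(j + k).toNat, by have := hj.1; omega⟩
    have hn : n < 2 * k + 1 := by have := hj.2; omega
    simpa only [List.get_ofFn, Fin.val_cast] using h ⟨n, by rw [List.length_ofFn]; exact hn⟩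

variable [MeasurableSpace A] [MeasurableSingletonClass A]

lemma measurableSet_windowCyl (k : ℕ) (v : Set.Icc (-(k : ℤ)) k → A) :
    MeasurableSet (windowCyl k v) := by
  have : windowCyl k v = ⋂ j : Set.Icc (-(k : ℤ)) k, (fun x : ℤ → A => x j) ⁻¹' {v j} := by
    ext; simp [windowCyl]
  rw [this]
  exact .iInter fun j => measurable_pi_apply _ (measurableSet_singleton _)

lemma generateFrom_windowCyl [Finite A] :
    MeasurableSpace.generateFrom {s : Set (ℤ → A) | ∃ k v, s = windowCyl k v}
      = MeasurableSpace.pi := by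
  refine le_antisymm (MeasurableSpace.generateFrom_le ?_) (iSup_le fun i => ?_)
  · rintro _ ⟨k, v, rfl⟩
    exact measurableSet_windowCyl k v
  · refine Measurable.comap_le (@measurable_to_countable' A (ℤ → A) _ _
      (MeasurableSpace.generateFrom _) (fun x => x i) fun a => ?_)
    have hi : i ∈ Set.Icc (-(i.natAbs : ℤ)) i.natAbs := ⟨by omega, by omega⟩
    have : (fun x : ℤ → A => x i) ⁻¹' {a}
        = ⋃ (v : Set.Icc (-(i.natAbs : ℤ)) i.natAbs → A) (_ : v ⟨i, hi⟩ = a),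
            windowCyl i.natAbs v := by
      ext x
      simp only [Set.mem_preimage, Set.mem_singleton_iff, Set.mem_iUnion]
      exact ⟨fun h => ⟨fun j => x j, h, fun j => rfl⟩, fun ⟨v, hv, hx⟩ => (hx ⟨i, hi⟩).trans hv⟩
    rw [this]
    exact .iUnion fun v => .iUnion fun _ => MeasurableSpace.measurableSet_generateFrom ⟨_, v, rfl⟩

theorem ext_of_cylAt [Finite A] {X : Set (ℤ → A)} {μ μ' : Measure X} [IsProbabilityMeasure μ]
    [IsProbabilityMeasure μ'] (h : ∀ i w, w ≠ [] → μ (cylAt X i w) = μ' (cylAt X i w)) :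
    μ = μ' := by
  refine ext_of_generate_finite _ ?_ (isPiSystem_windowCyl.comap Subtype.val) ?_ (by simp)
  · show MeasurableSpace.comap Subtype.val MeasurableSpace.pi = _
    rw [← generateFrom_windowCyl, MeasurableSpace.comap_generateFrom]
    rfl
  · rintro _ ⟨_, ⟨k, v, rfl⟩, rfl⟩
    rw [preimage_val_windowCyl]
    exact h _ _ (by simp)

end WindowCylinders

theorem stmt8_general {A : Type*} [Fintype A] [DecidableEq A]
    [MeasurableSpace A] [MeasurableSingletonClass A]
    (τ : ℕ → A → List A) (hgrow : GrowsUnbounded τ)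
    (hprim : IsPrimitive τ) (huni : ∀ n, IsUnimodular (τ n)) (hprop : ∀ n, IsProper (τ n))
    (X : Set (ℤ → A)) (hX : X = SadicShift τ)
    (hS : ∀ x ∈ X, shift x ∈ X)
    (μ μ' : Measure ↥X)
    (hμ : InvProb (shiftOn X hS) μ) (hμ' : InvProb (shiftOn X hS) μ')
    (heq : ∀ a : A, μ (cylLetter X a) = μ' (cylLetter X a)) :
    μ = μ' := by
  subst hX
  have := hμ.1
  have := hμ'.1
  refine ext_of_cylAt fun i w hw => ?_
  obtain ⟨r, C, hC⟩ := exists_abs_occCount_sub_sum_le hgrow hprim huni hprop w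
  have hC' u (hu : u ∈ Lang (SadicShift τ)) := hC u (lang_sadicShift_subset τ hu)
  have h := measureReal_cylWord_eq_sum hμ hw r C hC'
  have h' := measureReal_cylWord_eq_sum hμ' hw r C hC'
  simp only [measureReal_def, heq] at h h'
  rw [measure_cylAt hμ, measure_cylAt hμ']
  exact (ENNReal.toReal_eq_toReal_iff' (measure_ne_top _ _) (measure_ne_top _ _)).1
    (h.trans h'.symm)

theorem stmt8 {A : Type*} [Fintype A] [DecidableEq A] [TopologicalSpace A] [DiscreteTopology A]
    [MeasurableSpace A] [MeasurableSingletonClass A] (hcard : 2 ≤ Fintype.card A)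
    (τ : ℕ → A → List A) (hner : ∀ n, NonErasing (τ n)) (hgrow : GrowsUnbounded τ)
    (hprim : IsPrimitive τ) (huni : ∀ n, IsUnimodular (τ n)) (hprop : ∀ n, IsProper (τ n))
    (X : Set (ℤ → A)) (hX : X = SadicShift τ)
    (hS : ∀ x ∈ X, shift x ∈ X)
    (μ μ' : Measure ↥X)
    (hμ : InvProb (shiftOn X hS) μ) (hμ' : InvProb (shiftOn X hS) μ')
    (heq : ∀ a : A, μ (cylLetter X a) = μ' (cylLetter X a)) :
    μ = μ' :=
  stmt8_general τ hgrow hprim huni hprop X hX hS μ μ' hμ hμ' heq
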